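/- arXiv:1711.00806 — 3 statements merged into one kernel-verified Lean document; each statement's English description precedes it below -/
import Mathlib

section
/- Let Λ be a nontrivial discrete additive subgroup of ℂ that is invariant under complex conjugation. If Λ has rank 1, then Λ = ⟨a⟩_ℤ or Λ = ⟨ia⟩_ℤ for some real a ≠ 0. If Λ has rank 2, then Λ contains a finite-index subgroup of the form ⟨a, bi⟩_ℤ for some real a, b ≠ 0. -/
open Complex

noncomputable section

/-- The Weierstrass ℘-function of a subgroup `Λ` of `ℂ`:
`℘_Λ(u) = 1/u² + Σ_{ω ∈ Λ\{0}} (1/(u−ω)² − 1/ω²)`. -/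
noncomputable def wp (Λ : AddSubgroup ℂ) (u : ℂ) : ℂ :=
  1 / u ^ 2 + ∑' ω : {ω : ℂ // ω ∈ Λ ∧ ω ≠ 0}, (1 / (u - ω.1) ^ 2 - 1 / ω.1 ^ 2)

/-- A lattice of `ℂ`: the ℤ-span of two ℝ-linearly independent complex numbers. -/
def IsLattice (Λ : AddSubgroup ℂ) : Prop :=
  ∃ ω₁ ω₂ : ℂ, LinearIndependent ℝ ![ω₁, ω₂] ∧ Λ = AddSubgroup.closure {ω₁, ω₂}

/-- The complex conjugate subgroup. -/
noncomputable def conjL (Λ : AddSubgroup ℂ) : AddSubgroup ℂ :=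
  Λ.map (starRingEnd ℂ).toAddMonoidHom

/-- The subgroup `aΛ = {a·λ : λ ∈ Λ}`. -/
noncomputable def smulL (a : ℂ) (Λ : AddSubgroup ℂ) : AddSubgroup ℂ :=
  Λ.map (AddMonoidHom.mulLeft a)

/-- The Weierstrass σ-function of `Λ`. -/
noncomputable def wsigma (Λ : AddSubgroup ℂ) (u : ℂ) : ℂ :=
  u * ∏' ω : {ω : ℂ // ω ∈ Λ ∧ ω ≠ 0},
    ((1 - u / ω.1) * Complex.exp (u / ω.1 + u ^ 2 / (2 * ω.1 ^ 2)))

/-- The Weierstrass ζ-function of `Λ`, i.e. `σ_Λ'/σ_Λ`. -/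
noncomputable def wzeta (Λ : AddSubgroup ℂ) (u : ℂ) : ℂ :=
  deriv (wsigma Λ) u / wsigma Λ u

/-- A discrete subgroup of `ℂ`: every point is isolated. -/
def IsDiscreteSub (Λ : AddSubgroup ℂ) : Prop :=
  ∀ x ∈ Λ, ∃ ε > 0, ∀ y ∈ Λ, ‖y - x‖ < ε → y = x

/-! A discrete subgroup `Λ` of `ℂ` is a free `ℤ`-module whose rank is the real dimension of its
`ℝ`-span. In rank one `Λ = ℤg`, and `conj g = n • g` forces `n = ±1` since conjugation preserves
the norm, so `g` is real or purely imaginary. In rank two `Λ` lies on no line, so it contains `z`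
with `Re z ≠ 0` and `w` with `Im w ≠ 0`; then `a = z + conj z` and `bi = w - conj w` lie in `Λ` and
generate a subgroup of full rank, hence of finite index. -/

open Module

theorem AddSubgroup.finite_quotient_of_finrank_eq {M : Type*} [AddCommGroup M]
    [Module.Finite ℤ M] (H : AddSubgroup M) (hH : finrank ℤ H = finrank ℤ M) : Finite (M ⧸ H) := by
  have hrank := H.toIntSubmodule.finrank_quotient_add_finrank
  have : finrank ℤ (M ⧸ H.toIntSubmodule) = 0 := by
    change _ + finrank ℤ H = _ at hrank
    omega
  exact Module.finite_of_fg_torsion (M ⧸ H.toIntSubmodule)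
    (Module.finrank_eq_zero_iff_isTorsion.1 this)

theorem Complex.exists_eq_ofReal_or_eq_ofReal_mul_I {g : ℂ} (hg : g ≠ 0) {n : ℤ}
    (h : (starRingEnd ℂ) g = n • g) : ∃ a : ℝ, a ≠ 0 ∧ (g = a ∨ g = a * I) := by
  have hn : n = 1 ∨ n = -1 := by
    have := congrArg norm h
    rw [Complex.norm_conj, norm_zsmul ℝ, Real.norm_eq_abs] at this
    exact_mod_cast abs_eq zero_le_one |>.1 ((mul_eq_right₀ (norm_ne_zero_iff.2 hg)).1 this.symm)
  rcases hn with rfl | rfl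
  · rw [one_zsmul, Complex.conj_eq_iff_re] at h
    refine ⟨g.re, fun h0 ↦ hg ?_, Or.inl h.symm⟩
    rw [← h, h0, ofReal_zero]
  · have hre : g.re = -g.re := by simpa using congrArg re h
    have hg' : g = g.im * I := Complex.ext (by simp [show g.re = 0 by linarith]) (by simp)
    refine ⟨g.im, fun h0 ↦ hg ?_, Or.inr hg'⟩
    rw [hg', h0, ofReal_zero, zero_mul]

theorem Complex.linearIndependent_ofReal_ofReal_mul_I {a b : ℝ} (ha : a ≠ 0) (hb : b ≠ 0) :
    LinearIndependent ℤ ![(a : ℂ), b * I] := by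
  refine LinearIndependent.pair_iff.2 fun s t hst ↦ ?_
  have hre := congrArg re hst
  have him := congrArg im hst
  simp only [zsmul_eq_mul, add_re, add_im, mul_re, mul_im, intCast_re, intCast_im, ofReal_re,
    ofReal_im, I_re, I_im, zero_re, zero_im] at hre him
  simp_all

namespace IsDiscreteSub

variable {Λ : AddSubgroup ℂ}

theorem discreteTopology (hΛ : IsDiscreteSub Λ) : DiscreteTopology Λ := by
  rw [discreteTopology_iff_isOpen_singleton]
  rintro ⟨x, hx⟩
  obtain ⟨ε, hε, hsep⟩ := hΛ x hx
  exact Metric.isOpen_singleton_iff.2 ⟨ε, hε, fun y hy ↦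
    Subtype.ext (hsep y y.2 (by rwa [Subtype.dist_eq, dist_eq_norm] at hy))⟩

theorem moduleFinite (hΛ : IsDiscreteSub Λ) : Module.Finite ℤ Λ :=
  have : DiscreteTopology Λ.toIntSubmodule := hΛ.discreteTopology
  instModuleFinite_of_discrete_submodule Λ.toIntSubmodule

theorem moduleFree (hΛ : IsDiscreteSub Λ) : Module.Free ℤ Λ :=
  have : DiscreteTopology Λ.toIntSubmodule := hΛ.discreteTopology
  instModuleFree_of_discrete_submodule Λ.toIntSubmodule

theorem finrank_eq_finrank_span (hΛ : IsDiscreteSub Λ) :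
    finrank ℤ Λ = finrank ℝ (Submodule.span ℝ (Λ : Set ℂ)) := by
  have hspan : Submodule.span ℤ (Λ : Set ℂ) = Λ.toIntSubmodule :=
    Submodule.span_eq Λ.toIntSubmodule
  have : DiscreteTopology (Submodule.span ℤ (Λ : Set ℂ)) := hspan ▸ hΛ.discreteTopology
  have := Real.finrank_eq_int_finrank_of_discrete this
  rw [Set.finrank, Set.finrank, hspan] at this
  exact this.symm

theorem finrank_le_one_of_subset_span_singleton (hΛ : IsDiscreteSub Λ) (ω : ℂ)
    (h : (Λ : Set ℂ) ⊆ ℝ ∙ ω) : finrank ℤ Λ ≤ 1 := by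
  rw [hΛ.finrank_eq_finrank_span]
  calc finrank ℝ (Submodule.span ℝ (Λ : Set ℂ)) ≤ finrank ℝ (ℝ ∙ ω) :=
        Submodule.finrank_mono (Submodule.span_le.2 h)
    _ ≤ 1 := (finrank_span_le_card {ω}).trans (by simp)

theorem exists_eq_closure_of_finrank_eq_one (hΛ : IsDiscreteSub Λ) (h : finrank ℤ Λ = 1) :
    ∃ g ≠ 0, Λ = AddSubgroup.closure {g} := by
  have := hΛ.moduleFree
  obtain ⟨⟨g, hg⟩, hg0, hgen⟩ := finrank_eq_one_iff'.1 h
  refine ⟨g, by simpa using hg0,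
    le_antisymm (fun x hx ↦ ?_) ((AddSubgroup.closure_le Λ).2 (by simpa))⟩
  obtain ⟨n, hn⟩ := hgen ⟨x, hx⟩
  exact AddSubgroup.mem_closure_singleton.2 ⟨n, congrArg Subtype.val hn⟩

theorem eq_closure_ofReal_or_ofReal_mul_I (hΛ : IsDiscreteSub Λ)
    (hinv : ∀ z ∈ Λ, (starRingEnd ℂ) z ∈ Λ) (h : finrank ℤ Λ = 1) :
    ∃ a : ℝ, a ≠ 0 ∧
      (Λ = AddSubgroup.closure {(a : ℂ)} ∨ Λ = AddSubgroup.closure {(a : ℂ) * I}) := by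
  obtain ⟨g, hg0, rfl⟩ := hΛ.exists_eq_closure_of_finrank_eq_one h
  obtain ⟨n, hn⟩ := AddSubgroup.mem_closure_singleton.1 (hinv g (AddSubgroup.subset_closure rfl))
  obtain ⟨a, ha, rfl | rfl⟩ := Complex.exists_eq_ofReal_or_eq_ofReal_mul_I hg0 hn.symm
  exacts [⟨a, ha, Or.inl rfl⟩, ⟨a, ha, Or.inr rfl⟩]

theorem exists_ofReal_mem (hΛ : IsDiscreteSub Λ) (hinv : ∀ z ∈ Λ, (starRingEnd ℂ) z ∈ Λ)
    (h : finrank ℤ Λ = 2) : ∃ a : ℝ, a ≠ 0 ∧ (a : ℂ) ∈ Λ := by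
  obtain ⟨z, hz, hz0⟩ : ∃ z ∈ Λ, z.re ≠ 0 := by
    by_contra! h0
    have := hΛ.finrank_le_one_of_subset_span_singleton I fun z hz ↦
      Submodule.mem_span_singleton.2 ⟨z.im, Complex.ext (by simp [h0 z hz]) (by simp)⟩
    omega
  refine ⟨2 * z.re, by positivity, ?_⟩
  rw [← add_conj]
  exact Λ.add_mem hz (hinv z hz)

theorem exists_ofReal_mul_I_mem (hΛ : IsDiscreteSub Λ) (hinv : ∀ z ∈ Λ, (starRingEnd ℂ) z ∈ Λ)
    (h : finrank ℤ Λ = 2) : ∃ b : ℝ, b ≠ 0 ∧ (b : ℂ) * I ∈ Λ := by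
  obtain ⟨z, hz, hz0⟩ : ∃ z ∈ Λ, z.im ≠ 0 := by
    by_contra! h0
    have := hΛ.finrank_le_one_of_subset_span_singleton 1 fun z hz ↦
      Submodule.mem_span_singleton.2 ⟨z.re, Complex.ext (by simp) (by simp [h0 z hz])⟩
    omega
  refine ⟨2 * z.im, by positivity, ?_⟩
  rw [← sub_conj]
  exact Λ.sub_mem hz (hinv z hz)

theorem exists_closure_le_index_ne_zero (hΛ : IsDiscreteSub Λ)
    (hinv : ∀ z ∈ Λ, (starRingEnd ℂ) z ∈ Λ) (h : finrank ℤ Λ = 2) :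
    ∃ a b : ℝ, a ≠ 0 ∧ b ≠ 0 ∧ AddSubgroup.closure {(a : ℂ), (b : ℂ) * I} ≤ Λ ∧
      ((AddSubgroup.closure {(a : ℂ), (b : ℂ) * I}).addSubgroupOf Λ).index ≠ 0 := by
  obtain ⟨a, ha0, ha⟩ := hΛ.exists_ofReal_mem hinv h
  obtain ⟨b, hb0, hb⟩ := hΛ.exists_ofReal_mul_I_mem hinv h
  set Λ' := AddSubgroup.closure {(a : ℂ), (b : ℂ) * I}
  have hle : Λ' ≤ Λ :=
    (AddSubgroup.closure_le Λ).2 (Set.insert_subset ha (Set.singleton_subset_iff.2 hb))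
  refine ⟨a, b, ha0, hb0, hle, ?_⟩
  have := hΛ.moduleFinite
  have : Module.Finite ℤ (Λ'.addSubgroupOf Λ) :=
    (inferInstance : Module.Finite ℤ (Λ'.addSubgroupOf Λ).toIntSubmodule)
  have hli : LinearIndependent ℤ
      ![(⟨⟨a, ha⟩, AddSubgroup.mem_addSubgroupOf.2 (AddSubgroup.subset_closure (by simp))⟩ :
        Λ'.addSubgroupOf Λ),
        ⟨⟨_, hb⟩, AddSubgroup.mem_addSubgroupOf.2 (AddSubgroup.subset_closure (by simp))⟩] :=
    LinearIndependent.pair_iff.2 fun s t hst ↦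
      LinearIndependent.pair_iff.1 (linearIndependent_ofReal_ofReal_mul_I ha0 hb0) s t
        (by simpa using congrArg (fun v : Λ'.addSubgroupOf Λ ↦ ((v : Λ) : ℂ)) hst)
  have := AddSubgroup.finite_quotient_of_finrank_eq (Λ'.addSubgroupOf Λ) <|
    le_antisymm (Submodule.finrank_le (Λ'.addSubgroupOf Λ).toIntSubmodule)
      (h ▸ by simpa using hli.fintype_card_le_finrank)
  exact AddSubgroup.index_ne_zero_of_finite

end IsDiscreteSub

theorem invariant_discrete_structure_general (Λ : AddSubgroup ℂ)
    (hdisc : IsDiscreteSub Λ) (hinv : ∀ z ∈ Λ, (starRingEnd ℂ) z ∈ Λ) :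
    (Module.rank ℤ ↥Λ = 1 →
      ∃ a : ℝ, a ≠ 0 ∧
        (Λ = AddSubgroup.closure {(a : ℂ)} ∨
         Λ = AddSubgroup.closure {(a : ℂ) * Complex.I})) ∧
    (Module.rank ℤ ↥Λ = 2 →
      ∃ a b : ℝ, a ≠ 0 ∧ b ≠ 0 ∧
        ∃ Λ' : AddSubgroup ℂ,
          Λ' = AddSubgroup.closure {(a : ℂ), (b : ℂ) * Complex.I} ∧ Λ' ≤ Λ ∧
          (Λ'.addSubgroupOf Λ).index ≠ 0) := by
  refine ⟨fun hr ↦ hdisc.eq_closure_ofReal_or_ofReal_mul_I hinv (finrank_eq_of_rank_eq hr),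
    fun hr ↦ ?_⟩
  obtain ⟨a, b, ha, hb, hle, hindex⟩ :=
    hdisc.exists_closure_le_index_ne_zero hinv (finrank_eq_of_rank_eq hr)
  exact ⟨a, b, ha, hb, _, rfl, hle, hindex⟩

/-- a nontrivial discrete conjugation-invariant subgroup of `ℂ` of rank 1 is
`⟨a⟩_ℤ` or `⟨ia⟩_ℤ` for some real `a ≠ 0`; if it has rank 2 it contains a finite index
subgroup of the form `⟨a, bi⟩_ℤ` with `a, b` nonzero reals. -/
theorem invariant_discrete_structure (Λ : AddSubgroup ℂ) (hnt : Λ ≠ ⊥)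
    (hdisc : IsDiscreteSub Λ) (hinv : ∀ z ∈ Λ, (starRingEnd ℂ) z ∈ Λ) :
    (Module.rank ℤ ↥Λ = 1 →
      ∃ a : ℝ, a ≠ 0 ∧
        (Λ = AddSubgroup.closure {(a : ℂ)} ∨
         Λ = AddSubgroup.closure {(a : ℂ) * Complex.I})) ∧
    (Module.rank ℤ ↥Λ = 2 →
      ∃ a b : ℝ, a ≠ 0 ∧ b ≠ 0 ∧
        ∃ Λ' : AddSubgroup ℂ,
          Λ' = AddSubgroup.closure {(a : ℂ), (b : ℂ) * Complex.I} ∧ Λ' ≤ Λ ∧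
          (Λ'.addSubgroupOf Λ).index ≠ 0) :=
  invariant_discrete_structure_general Λ hdisc hinv
end
end

section
/- Let Ω₁ be a sublattice of index n of a lattice Ω₂ in ℂ, and write Ω₂ = ⋃_{i=1}^n (Ω₁ + a_i) as a union of cosets. Then there exists a constant 𝔠 ∈ ℂ such that ℘_{Ω₂}(u) = Σ_{i=1}^n ℘_{Ω₁}(u + a_i) − 𝔠 for all u where both sides are defined. -/
open Complex

noncomputable section

/-! With `F_u(ω) = 1/(u - ω)² - 1/ω²` we have `℘_Λ(u) = ∑_{ω ∈ Λ} F_u(ω)`: the term `ω = 0` is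
`1/u²` because `1/0 = 0`. As `Ω₂` is the disjoint union of the cosets `Ω₁ - aᵢ` and
`F_u(ω - a) = F_{u+a}(ω) - F_a(ω)`, summing the absolutely convergent series coset by coset gives
`℘_{Ω₂}(u) = ∑ᵢ (℘_{Ω₁}(u + aᵢ) - ℘_{Ω₁}(aᵢ))`, so `𝔠 = ∑ᵢ ℘_{Ω₁}(aᵢ)`. -/

theorem hasSum_of_cosets {G M ι : Type*} [AddGroup G] [AddCommMonoid M] [TopologicalSpace M]
    [ContinuousAdd M] [Fintype ι] {H K : AddSubgroup G} {a : ι → G}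
    (hinj : ∀ i j, a i - a j ∈ H → i = j) (hcover : ∀ x, x ∈ K ↔ ∃ i, x - a i ∈ H)
    {f : G → M} {s : ι → M} (hs : ∀ i, HasSum (fun x : H => f (x + a i)) (s i)) :
    HasSum (fun y : K => f y) (∑ i, s i) := by
  classical
  have hcoset : ∀ i, HasSum (fun y : K => if (y : G) - a i ∈ H then f y else 0) (s i) := by
    intro i
    let shift : H → K := fun x => ⟨x + a i, (hcover _).2 ⟨i, by simp⟩⟩
    have hshift : Function.Injective shift := fun x y hxy => by
      simpa [shift] using congrArg Subtype.val hxy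
    rw [← hshift.hasSum_iff]
    · simpa [shift, Function.comp_def] using hs i
    · rintro y hy
      refine if_neg fun hyi => hy ⟨⟨_, hyi⟩, Subtype.ext ?_⟩
      simp [shift]
  convert hasSum_sum fun i _ => hcoset i using 1
  funext y
  obtain ⟨i, hi⟩ := (hcover y).1 y.2
  have hunique : ∀ j, (y : G) - a j ∈ H → j = i := fun j hj =>
    hinj j i (by simpa [sub_eq_add_neg, add_assoc] using H.add_mem (H.neg_mem hj) hi)
  rw [Finset.sum_eq_single i (fun j _ hji => if_neg fun hj => hji (hunique j hj)) (by simp),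
    if_pos hi]

theorem wp_eq_of_hasSum {Λ : AddSubgroup ℂ} {u S : ℂ}
    (h : HasSum (fun ω : Λ => 1 / (u - ω) ^ 2 - 1 / (ω : ℂ) ^ 2) S) : wp Λ u = S := by
  classical
  let incl : {ω : ℂ // ω ∈ Λ ∧ ω ≠ 0} → Λ := fun ω => ⟨ω, ω.2.1⟩
  have hincl : Function.Injective incl := fun x y hxy =>
    Subtype.ext (congrArg Subtype.val hxy :)
  have hrest := hasSum_ite_sub_hasSum h 0
  rw [← hincl.hasSum_iff] at hrest
  · rw [wp, (hrest.congr_fun ?_).tsum_eq]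
    · simp
    · intro ω
      simp [incl, ω.2.2]
  · rintro ω hω
    refine if_pos ?_
    by_contra hne
    exact hω ⟨⟨ω, ω.2, fun h0 => hne (Subtype.ext h0)⟩, rfl⟩

theorem IsLattice.exists_periodPair {Λ : AddSubgroup ℂ} (h : IsLattice Λ) :
    ∃ L : PeriodPair, L.lattice.toAddSubgroup = Λ := by
  obtain ⟨ω₁, ω₂, hli, rfl⟩ := h
  exact ⟨⟨ω₁, ω₂, hli⟩, by
    rw [PeriodPair.lattice, Submodule.span_int_eq_addSubgroupClosure]⟩

theorem IsLattice.hasSum_wp {Λ : AddSubgroup ℂ} (h : IsLattice Λ) (u : ℂ) :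
    HasSum (fun ω : Λ => 1 / (u - ω) ^ 2 - 1 / (ω : ℂ) ^ 2) (wp Λ u) := by
  obtain ⟨L, rfl⟩ := h.exists_periodPair
  have hL : HasSum (fun ω : L.lattice.toAddSubgroup => 1 / (u - ω) ^ 2 - 1 / (ω : ℂ) ^ 2)
      (L.weierstrassP u) := L.hasSum_weierstrassP u
  rwa [← wp_eq_of_hasSum hL] at hL

theorem IsLattice.hasSum_wp_add {Λ : AddSubgroup ℂ} (h : IsLattice Λ) (u b : ℂ) :
    HasSum (fun ω : Λ => 1 / (u - (ω + b)) ^ 2 - 1 / ((ω : ℂ) + b) ^ 2)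
      (wp Λ (u - b) - wp Λ (-b)) := by
  refine ((h.hasSum_wp (u - b)).sub (h.hasSum_wp (-b))).congr_fun fun ω => ?_
  rw [← neg_add', neg_sq]
  ring_nf

theorem wp_cosets_general (Ω₁ Ω₂ : AddSubgroup ℂ) (h₁ : IsLattice Ω₁)
    (n : ℕ) (a : Fin n → ℂ)
    (hinj : ∀ i j : Fin n, a i - a j ∈ Ω₁ → i = j)
    (hcover : ∀ x : ℂ, x ∈ Ω₂ ↔ ∃ i : Fin n, x - a i ∈ Ω₁) :
    ∃ c : ℂ, ∀ u : ℂ, u ∉ Ω₂ →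
      wp Ω₂ u = (∑ i : Fin n, wp Ω₁ (u + a i)) - c := by
  have hinj_neg : ∀ i j, -a i - -a j ∈ Ω₁ → i = j := fun i j h =>
    (hinj j i (by rwa [neg_sub_neg] at h)).symm
  have hcover_neg : ∀ x, x ∈ Ω₂ ↔ ∃ i, x - -a i ∈ Ω₁ := fun x => by
    rw [← neg_mem_iff, hcover]
    refine exists_congr fun i => ?_
    rw [← neg_mem_iff, neg_sub', neg_neg]
  refine ⟨∑ i, wp Ω₁ (a i), fun u _ => ?_⟩
  rw [← Finset.sum_sub_distrib]
  refine wp_eq_of_hasSum (hasSum_of_cosets (f := fun y => 1 / (u - y) ^ 2 - 1 / y ^ 2)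
    hinj_neg hcover_neg fun i => ?_)
  simpa only [sub_neg_eq_add, neg_neg] using h₁.hasSum_wp_add u (-a i)

/-- if `Ω₁ ≤ Ω₂` are lattices with coset representatives `a₁,…,aₙ`
(`Ω₂ = ⋃ᵢ (Ω₁ + aᵢ)`, the cosets being pairwise distinct, so `[Ω₂ : Ω₁] = n`), then there is
a constant `𝔠` with `℘_{Ω₂}(u) = Σᵢ ℘_{Ω₁}(u + aᵢ) − 𝔠` wherever defined. -/
theorem wp_cosets (Ω₁ Ω₂ : AddSubgroup ℂ) (h₁ : IsLattice Ω₁) (h₂ : IsLattice Ω₂)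
    (hle : Ω₁ ≤ Ω₂) (n : ℕ) (hn : 0 < n) (a : Fin n → ℂ)
    (hinj : ∀ i j : Fin n, a i - a j ∈ Ω₁ → i = j)
    (hcover : ∀ x : ℂ, x ∈ Ω₂ ↔ ∃ i : Fin n, x - a i ∈ Ω₁) :
    ∃ c : ℂ, ∀ u : ℂ, u ∉ Ω₂ →
      wp Ω₂ u = (∑ i : Fin n, wp Ω₁ (u + a i)) - c :=
  wp_cosets_general Ω₁ Ω₂ h₁ n a hinj hcover
end
end

section
/- Let Ω and Ω' be lattices of ℂ possessing a common sublattice, both invariant under complex conjugation. Then the generalized residue 𝔠(Ω, Ω') := 𝔠(Ω, Ω'') − ([Ω:Ω'']/[Ω':Ω''])·𝔠(Ω', Ω''), computed with respect to any common sublattice Ω'', is a real number. -/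
open Complex

noncomputable section

/-- `c` is the residue `𝔠(Ω₂, Ω₁)` of the sublattice `Ω₁ ≤ Ω₂`, of index `n`: the unique
constant with `℘_{Ω₂}(u) = Σ_{i=1}^n ℘_{Ω₁}(u + aᵢ) − c` for (distinct) coset
representatives `a₁,…,aₙ` of `Ω₁` in `Ω₂`. -/
def IsResidueWith (Ω₂ Ω₁ : AddSubgroup ℂ) (n : ℕ) (c : ℂ) : Prop :=
  ∃ a : Fin n → ℂ,
    (∀ i j : Fin n, a i - a j ∈ Ω₁ → i = j) ∧
    (∀ x : ℂ, x ∈ Ω₂ ↔ ∃ i : Fin n, x - a i ∈ Ω₁) ∧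
    ∀ u : ℂ, u ∉ Ω₂ → wp Ω₂ u = (∑ i : Fin n, wp Ω₁ (u + a i)) - c

/-!
Rearranging the defining series gives, for coset representatives `rᵢ` of `Λ₀` in `Λ`,
`Σᵢ ℘_{Λ₀}(u + rᵢ) = ℘_Λ(u) + Σᵢ ℘_{Λ₀}(rᵢ)`, so `𝔠(Λ, Λ₀) = Σᵢ ℘_{Λ₀}(rᵢ)` (the representative
lying in `Λ₀` sits at a pole and contributes a junk value). Applied to a tower `Λ₀ ≤ Ω'' ≤ Λ`
this gives `𝔠(Λ, Λ₀) = 𝔠(Λ, Ω'') + [Λ : Ω''] 𝔠(Ω'', Λ₀)`, hence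
`𝔠(Ω, Ω'') - ([Ω : Ω''] / [Ω' : Ω'']) 𝔠(Ω', Ω'') = 𝔠(Ω, Λ₀) - ([Ω : Ω''] / [Ω' : Ω'']) 𝔠(Ω', Λ₀)`.
Choosing `Λ₀ = [Ω : Ω''] Ω`, a conjugation-invariant lattice inside `Ω''`, both residues on the
right are real: `conj ℘_{Λ₀}(u) = ℘_{Λ₀}(conj u)`, conjugation permutes the cosets of `Λ₀` in the
invariant lattices `Ω, Ω'`, and by periodicity the sum does not depend on the representatives.
-/

open ComplexConjugate

variable {ι κ : Type*}

def wpSummand (u w : ℂ) : ℂ := 1 / (u - w) ^ 2 - 1 / w ^ 2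

lemma Summable.subtype_of_subset {α β : Type*} [AddCommGroup α] [UniformSpace α]
    [IsUniformAddGroup α] [CompleteSpace α] {f : β → α} {s t : Set β} (hst : s ⊆ t)
    (ht : Summable fun w : t => f w) : Summable fun w : s => f w :=
  ht.comp_injective (Set.inclusion_injective hst)

/-- As `1 / 0 = 0`, the `w = 0` term of the series is the leading term `1 / u ^ 2` of `wp`. -/
lemma wp_eq_tsum {Λ : AddSubgroup ℂ} {u : ℂ} (hs : Summable fun w : Λ => wpSummand u w) :
    wp Λ u = ∑' w : Λ, wpSummand u w := by
  have hs' : Summable fun w : ↥((Λ : Set ℂ) \ {0}) => wpSummand u w :=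
    hs.subtype_of_subset (t := (Λ : Set ℂ)) Set.sdiff_subset
  have h := Summable.tsum_union_disjoint (f := wpSummand u) Set.disjoint_sdiff_right
    ((Set.finite_singleton 0).summable _) hs'
  rw [Set.union_sdiff_cancel (Set.singleton_subset_iff.mpr (zero_mem Λ)), tsum_singleton] at h
  change _ = ∑' w : (Λ : Set ℂ), wpSummand u w
  rw [h]
  simp only [wpSummand, sub_zero, ne_eq, OfNat.ofNat_ne_zero, not_false_eq_true, zero_pow,
    div_zero]
  rfl

lemma wp_add_sub_wp {Λ : AddSubgroup ℂ} (hs : ∀ v, Summable fun w : Λ => wpSummand v w)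
    (u r : ℂ) : wp Λ (u + r) - wp Λ r = ∑' x : {x : ℂ | x + r ∈ Λ}, wpSummand u x := by
  let e : {x : ℂ | x + r ∈ Λ} ≃ Λ := (Equiv.addRight r).subtypeEquiv fun x => Iff.rfl
  rw [wp_eq_tsum (hs _), wp_eq_tsum (hs _), ← (hs _).tsum_sub (hs _), ← e.tsum_eq]
  refine tsum_congr fun x => ?_
  change wpSummand (u + r) (x + r) - wpSummand r (x + r) = wpSummand u x
  simp only [wpSummand]
  ring

lemma PeriodPair.wp_lattice (L : PeriodPair) : wp L.lattice.toAddSubgroup = L.weierstrassP :=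
  funext fun u => wp_eq_tsum (L.hasSum_weierstrassP u).summable

namespace IsLattice

variable {Λ : AddSubgroup ℂ}

lemma exists_periodPair_s16 (h : IsLattice Λ) : ∃ L : PeriodPair, L.lattice.toAddSubgroup = Λ := by
  obtain ⟨ω₁, ω₂, hind, rfl⟩ := h
  exact ⟨⟨ω₁, ω₂, hind⟩, Submodule.span_int_eq_addSubgroupClosure _⟩

lemma hasSum_wpSummand (h : IsLattice Λ) (u : ℂ) :
    HasSum (fun w : Λ => wpSummand u w) (wp Λ u) := by
  obtain ⟨L, rfl⟩ := h.exists_periodPair_s16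
  rw [L.wp_lattice]
  exact L.hasSum_weierstrassP u

lemma wp_add (h : IsLattice Λ) (u : ℂ) {l : ℂ} (hl : l ∈ Λ) : wp Λ (u + l) = wp Λ u := by
  obtain ⟨L, rfl⟩ := h.exists_periodPair_s16
  rw [L.wp_lattice]
  exact L.weierstrassP_add_coe u ⟨l, hl⟩

lemma exists_notMem (h : IsLattice Λ) : ∃ u, u ∉ Λ := by
  obtain ⟨L, rfl⟩ := h.exists_periodPair_s16
  exact ⟨_, L.ω₁_div_two_notMem_lattice⟩

lemma map_nsmul (h : IsLattice Λ) {N : ℕ} (hN : N ≠ 0) :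
    IsLattice (Λ.map (nsmulAddMonoidHom N)) := by
  obtain ⟨ω₁, ω₂, hind, rfl⟩ := h
  refine ⟨N • ω₁, N • ω₂, ?_, ?_⟩
  · convert hind.units_smul fun _ => Units.mk0 (N : ℝ) (by exact_mod_cast hN) using 1
    ext i
    fin_cases i <;> simp [nsmul_eq_mul, Complex.real_smul]
  · rw [AddMonoidHom.map_closure, Set.image_pair]
    rfl

lemma relIndex_map_nsmul_ne_zero (h : IsLattice Λ) {N : ℕ} (hN : N ≠ 0) :
    (Λ.map (nsmulAddMonoidHom N)).relIndex Λ ≠ 0 := by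
  obtain ⟨ω₁, ω₂, -, rfl⟩ := h
  rw [← Submodule.span_int_eq_addSubgroupClosure]
  have : Module.Finite ℤ (Submodule.span ℤ {ω₁, ω₂}).toAddSubgroup.toIntSubmodule := by
    rw [Submodule.toIntSubmodule_toAddSubgroup]
    exact Module.Finite.span_of_finite ℤ (Set.toFinite _)
  rw [AddSubgroup.relIndex_map_nsmul]
  exact pow_ne_zero _ hN

lemma exists_conjL_eq_self_le {Λ₁ : AddSubgroup ℂ} (hΛ : IsLattice Λ) (hinv : conjL Λ = Λ)
    (h₁ : Λ₁ ≤ Λ) (hfin : Λ₁.relIndex Λ ≠ 0) :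
    ∃ Λ₀, IsLattice Λ₀ ∧ conjL Λ₀ = Λ₀ ∧ Λ₀ ≤ Λ₁ ∧ Λ₀.relIndex Λ₁ ≠ 0 := by
  let φ := nsmulAddMonoidHom (α := ℂ) (Λ₁.relIndex Λ)
  have hle : Λ.map φ ≤ Λ₁ :=
    AddSubgroup.map_le_iff_le_comap.2 fun x hx => AddSubgroup.nsmul_relIndex_mem Λ₁ hx
  refine ⟨Λ.map φ, hΛ.map_nsmul hfin, ?_, hle, fun h => hΛ.relIndex_map_nsmul_ne_zero hfin ?_⟩
  · have hφ : (starRingEnd ℂ).toAddMonoidHom.comp φ = φ.comp (starRingEnd ℂ).toAddMonoidHom :=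
      AddMonoidHom.ext fun x => _root_.map_nsmul (starRingEnd ℂ) _ x
    rw [conjL, AddSubgroup.map_map, hφ, ← AddSubgroup.map_map]
    exact congrArg _ hinv
  · rw [← AddSubgroup.relIndex_mul_relIndex _ _ _ hle h₁, h, zero_mul]

end IsLattice

section CosetReps

variable {G : Type*} [AddCommGroup G]

lemma AddSubgroup.mk_addSubgroupOf_eq_iff {Λ₀ Λ : AddSubgroup G} {x y : Λ} :
    (x : Λ ⧸ Λ₀.addSubgroupOf Λ) = y ↔ (x : G) - y ∈ Λ₀ := by
  rw [QuotientAddGroup.eq_iff_sub_mem, AddSubgroup.mem_addSubgroupOf, AddSubgroup.coe_sub]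

def IsCosetReps (Λ₀ Λ : AddSubgroup G) (r : ι → G) : Prop :=
  (∀ i j, r i - r j ∈ Λ₀ → i = j) ∧ ∀ x, x ∈ Λ ↔ ∃ i, x - r i ∈ Λ₀

lemma isCosetReps_out {Λ₀ Λ : AddSubgroup G} (h : Λ₀ ≤ Λ) :
    IsCosetReps Λ₀ Λ fun q : Λ ⧸ Λ₀.addSubgroupOf Λ => ((Quotient.out q : Λ) : G) := by
  refine ⟨fun q q' hq => ?_,
    fun x => ⟨fun hx => ⟨QuotientAddGroup.mk ⟨x, hx⟩, ?_⟩, fun ⟨q, hq⟩ => ?_⟩⟩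
  · rw [← QuotientAddGroup.out_eq' q, ← QuotientAddGroup.out_eq' q']
    exact AddSubgroup.mk_addSubgroupOf_eq_iff.2 hq
  · exact AddSubgroup.mk_addSubgroupOf_eq_iff.1
      (QuotientAddGroup.out_eq' (QuotientAddGroup.mk ⟨x, hx⟩ : Λ ⧸ Λ₀.addSubgroupOf Λ)).symm
  · simpa using add_mem (h hq) (Quotient.out q).2

namespace IsCosetReps

variable {Λ₀ Λ₁ Λ : AddSubgroup G} {r : ι → G}

lemma mem (hr : IsCosetReps Λ₀ Λ r) (i : ι) : r i ∈ Λ :=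
  (hr.2 _).2 ⟨i, by simp⟩

lemma le (hr : IsCosetReps Λ₀ Λ r) : Λ₀ ≤ Λ := by
  intro x hx
  obtain ⟨i, hi⟩ := (hr.2 0).1 (zero_mem Λ)
  exact (hr.2 x).2 ⟨i, by simpa [sub_eq_add_neg] using add_mem hx hi⟩

lemma nonempty (hr : IsCosetReps Λ₀ Λ r) : Nonempty ι :=
  let ⟨i, _⟩ := (hr.2 0).1 (zero_mem Λ)
  ⟨i⟩

lemma exists_add_mem (hr : IsCosetReps Λ₀ Λ r) {x : G} (hx : x ∈ Λ) : ∃ i, x + r i ∈ Λ₀ := by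
  obtain ⟨i, hi⟩ := (hr.2 (-x)).1 (neg_mem hx)
  exact ⟨i, by simpa [add_comm] using neg_mem hi⟩

lemma add (hr : IsCosetReps Λ₀ Λ₁ r) {a : κ → G} (ha : IsCosetReps Λ₁ Λ a) :
    IsCosetReps Λ₀ Λ fun p : κ × ι => a p.1 + r p.2 := by
  refine ⟨fun ⟨k, i⟩ ⟨l, j⟩ h => ?_, fun x => ?_⟩
  · have hkl : k = l := ha.1 k l (by
      simpa [add_sub_add_comm] using sub_mem (hr.le h) (sub_mem (hr.mem i) (hr.mem j)))
    subst hkl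
    simp only [add_sub_add_left_eq_sub] at h
    rw [hr.1 i j h]
  · rw [ha.2]
    constructor
    · rintro ⟨k, hk⟩
      obtain ⟨i, hi⟩ := (hr.2 _).1 hk
      exact ⟨(k, i), by simpa [sub_sub] using hi⟩
    · rintro ⟨⟨k, i⟩, h⟩
      refine ⟨k, ?_⟩
      simpa only [sub_add_eq_sub_sub, sub_add_cancel] using add_mem (hr.le h) (hr.mem i)

lemma bijective_mk (hr : IsCosetReps Λ₀ Λ r) :
    Function.Bijective fun i => ((⟨r i, hr.mem i⟩ : Λ) : Λ ⧸ Λ₀.addSubgroupOf Λ) := by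
  refine ⟨fun i j hij => hr.1 i j (AddSubgroup.mk_addSubgroupOf_eq_iff.1 hij), fun q => ?_⟩
  induction q using QuotientAddGroup.induction_on with | H x => ?_
  obtain ⟨i, hi⟩ := (hr.2 x).1 x.2
  exact ⟨i, (AddSubgroup.mk_addSubgroupOf_eq_iff.2 hi).symm⟩

lemma relIndex_eq (hr : IsCosetReps Λ₀ Λ r) : Λ₀.relIndex Λ = Nat.card ι :=
  (Nat.card_eq_of_bijective _ hr.bijective_mk).symm

lemma relIndex_ne_zero [Finite ι] (hr : IsCosetReps Λ₀ Λ r) : Λ₀.relIndex Λ ≠ 0 := by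
  rw [hr.relIndex_eq]
  exact Nat.card_ne_zero.2 ⟨hr.nonempty, ‹_›⟩

lemma sum_eq_of_periodic [Fintype ι] [Fintype κ] (hr : IsCosetReps Λ₀ Λ r) {s : κ → G}
    (hs : IsCosetReps Λ₀ Λ s) {M : Type*} [AddCommMonoid M] {f : G → M}
    (hf : ∀ x, ∀ l ∈ Λ₀, f (x + l) = f x) :
    ∑ i, f (r i) = ∑ j, f (s j) := by
  let e := (Equiv.ofBijective _ hr.bijective_mk).trans (Equiv.ofBijective _ hs.bijective_mk).symm
  refine Fintype.sum_equiv e _ _ fun i => ?_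
  have he : s (e i) - r i ∈ Λ₀ :=
    AddSubgroup.mk_addSubgroupOf_eq_iff.1 <|
      (Equiv.ofBijective _ hs.bijective_mk).apply_symm_apply _
  simpa using (hf (r i) _ he).symm

end IsCosetReps

end CosetReps

lemma mem_conjL {Λ : AddSubgroup ℂ} {x : ℂ} : x ∈ conjL Λ ↔ conj x ∈ Λ := by
  constructor
  · rintro ⟨y, hy, rfl⟩
    simpa using hy
  · exact fun h => ⟨conj x, h, conj_conj x⟩

lemma conj_mem_iff {Λ : AddSubgroup ℂ} (h : conjL Λ = Λ) {x : ℂ} : conj x ∈ Λ ↔ x ∈ Λ := by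
  rw [← mem_conjL, h]

lemma conj_wp (Λ : AddSubgroup ℂ) (u : ℂ) : conj (wp Λ u) = wp (conjL Λ) (conj u) := by
  let e : {ω : ℂ // ω ∈ Λ ∧ ω ≠ 0} ≃ {ω : ℂ // ω ∈ conjL Λ ∧ ω ≠ 0} :=
    (starAddEquiv (R := ℂ)).toEquiv.subtypeEquiv fun ω => by simp [mem_conjL]
  simp only [wp, map_add, map_sub, map_div₀, map_one, map_pow, conj_tsum]
  rw [← e.tsum_eq]
  rfl

namespace IsCosetReps

variable {Λ₀ Λ₁ Λ : AddSubgroup ℂ} {r : ι → ℂ}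

lemma map_conj (hr : IsCosetReps Λ₀ Λ r) (h₀ : conjL Λ₀ = Λ₀) (h : conjL Λ = Λ) :
    IsCosetReps Λ₀ Λ fun i => conj (r i) := by
  refine ⟨fun i j hij => hr.1 i j ?_, fun x => ?_⟩
  · rwa [← conj_mem_iff h₀, map_sub]
  · rw [← conj_mem_iff h, hr.2]
    simp only [← conj_mem_iff h₀ (x := _ - conj _), map_sub, conj_conj]

/-- The cosets `{x | x + r i ∈ Λ₀}` partition `Λ`, so the series of `wp Λ u` splits into the
series of `wp Λ₀ (u + r i) - wp Λ₀ (r i)`. -/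
lemma sum_wp_add [Fintype ι] (hr : IsCosetReps Λ₀ Λ r)
    (hΛ : ∀ v, Summable fun w : Λ => wpSummand v w) (u : ℂ) :
    ∑ i, wp Λ₀ (u + r i) = wp Λ u + ∑ i, wp Λ₀ (r i) := by
  have hΛ₀ : ∀ v, Summable fun w : Λ₀ => wpSummand v w := fun v =>
    (hΛ v).subtype_of_subset (t := (Λ : Set ℂ)) hr.le
  let C : ι → Set ℂ := fun i => {x | x + r i ∈ Λ₀}
  have hunion : (⋃ i ∈ (Finset.univ : Finset ι), C i) = Λ := by
    ext x
    simp only [Finset.mem_univ, Set.iUnion_true, Set.mem_iUnion, SetLike.mem_coe]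
    refine ⟨fun ⟨i, hi⟩ => ?_, hr.exists_add_mem⟩
    simpa using sub_mem (hr.le hi) (hr.mem i)
  have hdisj : ((Finset.univ : Finset ι) : Set ι).Pairwise (Function.onFun Disjoint C) :=
    fun i _ j _ hij => Set.disjoint_left.2 fun x hi hj => hij (hr.1 i j (by
      simpa only [add_sub_add_left_eq_sub] using sub_mem (show x + r i ∈ Λ₀ from hi) hj))
  have hC : ∀ i ∈ (Finset.univ : Finset ι), Summable fun x : C i => wpSummand u x :=
    fun i _ => (hΛ u).subtype_of_subset fun x hx =>
      hunion ▸ Set.mem_biUnion (Finset.mem_univ i) hx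
  rw [← sub_eq_iff_eq_add, ← Finset.sum_sub_distrib, wp_eq_tsum (hΛ u)]
  change _ = ∑' x : (Λ : Set ℂ), wpSummand u x
  rw [← hunion, Summable.tsum_finset_bUnion_disjoint (f := wpSummand u) hdisj hC]
  exact Finset.sum_congr rfl fun i _ => wp_add_sub_wp hΛ₀ u (r i)

lemma im_sum_wp_eq_zero [Fintype ι] (hr : IsCosetReps Λ₀ Λ r) (hinv : conjL Λ = Λ)
    (hΛ₀ : IsLattice Λ₀) (hinv₀ : conjL Λ₀ = Λ₀) : (∑ i, wp Λ₀ (r i)).im = 0 := by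
  rw [← Complex.conj_eq_iff_im, map_sum]
  simp only [conj_wp, hinv₀]
  exact (hr.sum_eq_of_periodic (hr.map_conj hinv₀ hinv) fun x _ hl => hΛ₀.wp_add x hl).symm

lemma im_sum_wp_add_card_mul_eq_zero [Fintype ι] [Fintype κ] {a : κ → ℂ}
    (ha : IsCosetReps Λ₁ Λ a) (hr : IsCosetReps Λ₀ Λ₁ r) (hΛ : IsLattice Λ)
    (hinv : conjL Λ = Λ) (hΛ₀ : IsLattice Λ₀) (hinv₀ : conjL Λ₀ = Λ₀) :
    (∑ k, wp Λ₁ (a k) + Fintype.card κ * ∑ i, wp Λ₀ (r i)).im = 0 := by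
  have hΛ₁ : ∀ v, Summable fun w : Λ₁ => wpSummand v w := fun v =>
    (hΛ.hasSum_wpSummand v).summable.subtype_of_subset (t := (Λ : Set ℂ)) ha.le
  have htower : ∑ k, wp Λ₁ (a k) + Fintype.card κ * ∑ i, wp Λ₀ (r i) =
      ∑ p : κ × ι, wp Λ₀ (a p.1 + r p.2) := by
    simp only [Fintype.sum_prod_type, hr.sum_wp_add hΛ₁, Finset.sum_add_distrib,
      Finset.sum_const, Finset.card_univ, nsmul_eq_mul]
  rw [htower]
  exact (hr.add ha).im_sum_wp_eq_zero hinv hΛ₀ hinv₀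

end IsCosetReps

lemma IsResidueWith.exists_isCosetReps_eq_sum {Λ Λ₀ : AddSubgroup ℂ} {n : ℕ} {c : ℂ}
    (h : IsResidueWith Λ Λ₀ n c) (hΛ : IsLattice Λ) :
    ∃ a : Fin n → ℂ, IsCosetReps Λ₀ Λ a ∧ c = ∑ i, wp Λ₀ (a i) := by
  obtain ⟨a, ha₁, ha₂, hc⟩ := h
  obtain ⟨u, hu⟩ := hΛ.exists_notMem
  have := IsCosetReps.sum_wp_add ⟨ha₁, ha₂⟩ (fun v => (hΛ.hasSum_wpSummand v).summable) u
  exact ⟨a, ⟨ha₁, ha₂⟩, by linear_combination hc u hu + this⟩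

theorem generalized_residue_real_general (Ω Ω' Ω'' : AddSubgroup ℂ)
    (hΩ : IsLattice Ω) (hΩ' : IsLattice Ω')
    (hinv : conjL Ω = Ω) (hinv' : conjL Ω' = Ω')
    (m k : ℕ) (c c' : ℂ)
    (hres : IsResidueWith Ω Ω'' m c) (hres' : IsResidueWith Ω' Ω'' k c') :
    (c - ((m : ℂ) / (k : ℂ)) * c').im = 0 := by
  obtain ⟨a, ha, rfl⟩ := hres.exists_isCosetReps_eq_sum hΩ
  obtain ⟨b, hb, rfl⟩ := hres'.exists_isCosetReps_eq_sum hΩ'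
  obtain ⟨Ω₀, hΩ₀, hinv₀, hle₀, hfin⟩ :=
    hΩ.exists_conjL_eq_self_le hinv ha.le ha.relIndex_ne_zero
  have : (Ω₀.addSubgroupOf Ω'').FiniteIndex := ⟨hfin⟩
  have : Fintype (Ω'' ⧸ Ω₀.addSubgroupOf Ω'') := Fintype.ofFinite _
  have hr := isCosetReps_out hle₀
  have h := ha.im_sum_wp_add_card_mul_eq_zero hr hΩ hinv hΩ₀ hinv₀
  have h' := hb.im_sum_wp_add_card_mul_eq_zero hr hΩ' hinv' hΩ₀ hinv₀
  rw [Fintype.card_fin] at h h'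
  have hk : (k : ℂ) ≠ 0 := Nat.cast_ne_zero.2 (Fin.pos_iff_nonempty.2 hb.nonempty).ne'
  set γ := ∑ q : Ω'' ⧸ Ω₀.addSubgroupOf Ω'', wp Ω₀ (Quotient.out q : Ω'')
  rw [show ∑ i, wp Ω'' (a i) - m / k * ∑ j, wp Ω'' (b j) =
      (∑ i, wp Ω'' (a i) + m * γ) - ((m / k : ℝ) : ℂ) * (∑ j, wp Ω'' (b j) + k * γ) by
    push_cast; field_simp; ring]
  rw [Complex.sub_im, Complex.im_ofReal_mul, h, h', mul_zero, sub_zero]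

/-- for conjugation-invariant lattices `Ω, Ω'` with a common sublattice `Ω''`,
the generalized residue `𝔠(Ω,Ω') = 𝔠(Ω,Ω'') − ([Ω:Ω'']/[Ω':Ω''])·𝔠(Ω',Ω'')` is real. -/
theorem generalized_residue_real (Ω Ω' Ω'' : AddSubgroup ℂ)
    (hΩ : IsLattice Ω) (hΩ' : IsLattice Ω') (hΩ'' : IsLattice Ω'')
    (hle : Ω'' ≤ Ω) (hle' : Ω'' ≤ Ω')
    (hinv : conjL Ω = Ω) (hinv' : conjL Ω' = Ω')
    (m k : ℕ) (c c' : ℂ)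
    (hres : IsResidueWith Ω Ω'' m c) (hres' : IsResidueWith Ω' Ω'' k c') :
    (c - ((m : ℂ) / (k : ℂ)) * c').im = 0 :=
  generalized_residue_real_general Ω Ω' Ω'' hΩ hΩ' hinv hinv' m k c c' hres hres'
end
end
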